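/- Let K be a positive integer, γ > 0, and R₀ a Hermitian positive definite K×K complex matrix, and define recursively R_{m+1} = R_m·(I + γ⁻¹R_m)⁻¹ for m ≥ 0. Then every R_m is Hermitian positive definite and R_m = (R₀⁻¹ + (m/γ)·I)⁻¹ for all m ≥ 0; in particular the sequence R_m converges to the zero matrix as m → ∞. -/
import Mathlib

open MeasureTheory Complex Filter ComplexOrder

noncomputable section

/-- The correlation-matrix update rule `R_{m+1} = R_m (I + R_m/γ)⁻¹` of Algorithm 1:
closed form, positive definiteness, and convergence to the zero matrix. -/
theorem stmt14 (K : ℕ) (hK : 0 < K) (γ : ℝ) (hγ : 0 < γ)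
    (Rm : ℕ → Matrix (Fin K) (Fin K) ℂ) (hR0 : (Rm 0).PosDef)
    (hrec : ∀ m : ℕ, Rm (m + 1) = Rm m * (1 + ((γ : ℂ))⁻¹ • Rm m)⁻¹) :
    (∀ m : ℕ, (Rm m).PosDef)
    ∧ (∀ m : ℕ,
        Rm m = ((Rm 0)⁻¹ + ((m : ℂ) / (γ : ℂ)) • (1 : Matrix (Fin K) (Fin K) ℂ))⁻¹)
    ∧ Tendsto Rm atTop (nhds (0 : Matrix (Fin K) (Fin K) ℂ)) := by
  have hγc : (γ : ℂ) ≠ 0 := by exact_mod_cast hγ.ne'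
  set A : ℕ → Matrix (Fin K) (Fin K) ℂ :=
    fun m => (Rm 0)⁻¹ + ((m : ℂ) / (γ : ℂ)) • 1 with hAdef
  -- positive semidefiniteness of the scalar part
  have hsemi : ∀ m : ℕ, (((m : ℂ) / (γ : ℂ)) • (1 : Matrix (Fin K) (Fin K) ℂ)).PosSemidef := by
    intro m
    have h0 : (0 : ℂ) ≤ (m : ℂ) / (γ : ℂ) := by
      have : ((m / γ : ℝ) : ℂ) = (m : ℂ) / (γ : ℂ) := by push_cast; ring
      rw [← this]
      exact_mod_cast div_nonneg (Nat.cast_nonneg m) hγ.le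
    rw [← Matrix.diagonal_one, ← Matrix.diagonal_smul]
    exact Matrix.PosSemidef.diagonal (fun i => by simpa using h0)
  have hA : ∀ m : ℕ, (A m).PosDef := fun m => hR0.inv.add_posSemidef (hsemi m)
  have hAu : ∀ m : ℕ, IsUnit (A m).det := fun m => (hA m).det_pos.ne'.isUnit
  -- the closed form
  have hclosed : ∀ m : ℕ, Rm m = (A m)⁻¹ := by
    intro m
    induction m with
    | zero =>
      have : A 0 = (Rm 0)⁻¹ := by simp [hAdef]
      rw [this, Matrix.nonsing_inv_nonsing_inv _ hR0.det_pos.ne'.isUnit]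
    | succ m ih =>
      have hsucc : A (m + 1) = A m + (γ : ℂ)⁻¹ • 1 := by
        have h1 : (((m : ℕ) + 1 : ℕ) : ℂ) / (γ : ℂ) = (m : ℂ) / (γ : ℂ) + (γ : ℂ)⁻¹ := by
          push_cast; ring
        simp only [hAdef, h1, add_smul]
        abel
      have hkey : 1 + ((γ : ℂ))⁻¹ • (A m)⁻¹ = (A m)⁻¹ * A (m + 1) := by
        rw [hsucc, Matrix.mul_add, Matrix.nonsing_inv_mul _ (hAu m),
          Matrix.mul_smul, Matrix.mul_one]
      have hcomm : A m * A (m + 1) = A (m + 1) * A m := by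
        rw [hsucc]
        exact ((Commute.refl (A m)).add_right
          (((Commute.one_right (A m)).smul_right ((γ : ℂ)⁻¹)))).eq
      calc Rm (m + 1) = Rm m * (1 + ((γ : ℂ))⁻¹ • Rm m)⁻¹ := hrec m
        _ = (A m)⁻¹ * (1 + ((γ : ℂ))⁻¹ • (A m)⁻¹)⁻¹ := by rw [ih]
        _ = (A m)⁻¹ * ((A m)⁻¹ * A (m + 1))⁻¹ := by rw [hkey]
        _ = (A m)⁻¹ * ((A (m + 1))⁻¹ * A m) := by
            rw [Matrix.mul_inv_rev, Matrix.nonsing_inv_nonsing_inv _ (hAu m)]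
        _ = ((A m)⁻¹ * (A (m + 1))⁻¹) * A m := by rw [Matrix.mul_assoc]
        _ = ((A (m + 1))⁻¹ * (A m)⁻¹) * A m := by
            rw [← Matrix.mul_inv_rev, ← hcomm, Matrix.mul_inv_rev]
        _ = (A (m + 1))⁻¹ * ((A m)⁻¹ * A m) := by rw [Matrix.mul_assoc]
        _ = (A (m + 1))⁻¹ := by rw [Matrix.nonsing_inv_mul _ (hAu m), Matrix.mul_one]
  have hposdef : ∀ m : ℕ, (Rm m).PosDef := fun m => (hclosed m) ▸ (hA m).inv
  refine ⟨hposdef, hclosed, ?_⟩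
  -- convergence
  set B : ℕ → Matrix (Fin K) (Fin K) ℂ :=
    fun m => ((γ : ℂ) / (m : ℂ)) • (Rm 0)⁻¹ + 1 with hBdef
  have h2 : Tendsto (fun m : ℕ => (γ : ℂ) / (m : ℂ)) atTop (nhds 0) := by
    have h1 : Tendsto (fun m : ℕ => (γ / m : ℝ)) atTop (nhds 0) :=
      tendsto_const_div_atTop_nhds_zero_nat γ
    have h3 := (Complex.continuous_ofReal.tendsto 0).comp h1
    simpa [Function.comp_def, Complex.ofReal_div] using h3
  have hB : Tendsto B atTop (nhds 1) := by
    have := (h2.smul_const ((Rm 0)⁻¹)).add (tendsto_const_nhds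
      (x := (1 : Matrix (Fin K) (Fin K) ℂ)))
    simpa [hBdef] using this
  have hone : (1 : Matrix (Fin K) (Fin K) ℂ)⁻¹ = 1 := Matrix.inv_eq_left_inv (by simp)
  have hBinv : Tendsto (fun m => (B m)⁻¹) atTop (nhds 1) := by
    have hc : ContinuousAt Inv.inv (1 : Matrix (Fin K) (Fin K) ℂ) := by
      refine continuousAt_matrix_inv _ ?_
      rw [Matrix.det_one, Ring.inverse_eq_inv']
      exact continuousAt_inv₀ one_ne_zero
    have := hc.tendsto.comp hB
    simpa [Function.comp_def, hone] using this
  have hlim : Tendsto (fun m : ℕ => ((γ : ℂ) / (m : ℂ)) • (B m)⁻¹) atTop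
      (nhds (0 : Matrix (Fin K) (Fin K) ℂ)) := by
    have := h2.smul hBinv
    simpa using this
  refine hlim.congr' ?_
  filter_upwards [eventually_ge_atTop 1] with m hm
  have hmc : (m : ℂ) ≠ 0 := by exact_mod_cast (Nat.one_le_iff_ne_zero.mp hm)
  have hc0 : (m : ℂ) / (γ : ℂ) ≠ 0 := div_ne_zero hmc hγc
  have h1 : (γ : ℂ) / (m : ℂ) * ((m : ℂ) / (γ : ℂ)) = 1 := by field_simp
  have hB' : B m = ((m : ℂ) / (γ : ℂ))⁻¹ • A m := by
    rw [inv_div]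
    simp only [hBdef, hAdef, smul_add, smul_smul, h1, one_smul]
  have hinv : (B m)⁻¹ = ((m : ℂ) / (γ : ℂ)) • (A m)⁻¹ := by
    letI : Invertible (((m : ℂ) / (γ : ℂ))⁻¹) := invertibleOfNonzero (inv_ne_zero hc0)
    rw [hB', Matrix.inv_smul (A m) (((m : ℂ) / (γ : ℂ))⁻¹) (hAu m),
      invOf_eq_inv, inv_inv]
  rw [hinv, smul_smul, h1, one_smul, hclosed m]

end
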